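/- arXiv:1410.4352 — 3 statements merged into one kernel-verified Lean document; each statement's English description precedes it below -/
import Mathlib

section
/- Given finite subsets B ⊇ S ⊇ A of a totally ordered set N and an element z ∈ N ∖ B, the products of total incidence numbers [B:S][S:A] and [B ⊔ {z} : S ⊔ {z}][S ⊔ {z} : A ⊔ {z}] differ by a sign factor ε ∈ {1, −1} that is independent of S (it depends only on B, A and z; explicitly ε = (−1)^m where m is the number of elements of B ∖ A greater than z). Moreover [B ⊔ {z} : A ⊔ {z}] = ε · [B:A] with the same factor ε. -/
/-- The total incidence number `[B:A]` for finite subsets `A ⊆ B` of a totally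
ordered set: `[B:A] = (−1)^κ` where `κ` is the number of pairs
`(w,x) ∈ B × (B∖A)` with `w < x`; and `[B:A] = 0` if `A ⊄ B`. -/
noncomputable def incNum {α : Type} [LinearOrder α] (B A : Finset α) : ℤ :=
  if A ⊆ B then
    (-1 : ℤ) ^ ((B ×ˢ (B \ A)).filter (fun p => p.1 < p.2)).card
  else 0

/-- Key lemma: inserting a fresh element `z` into both `B` and `A` changes the
incidence number by the sign `(−1)^m` where `m` counts elements of `B ∖ A`
greater than `z`. -/
lemma incNum_insert_key {α : Type} [LinearOrder α] (B A : Finset α) (h : A ⊆ B)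
    (z : α) (hz : z ∉ B) :
    incNum (insert z B) (insert z A) =
      (-1 : ℤ) ^ ((B \ A).filter (fun w => z < w)).card * incNum B A := by
  have hzA : z ∉ A := fun hx => hz (h hx)
  have hsd : insert z B \ insert z A = B \ A := by
    ext x
    simp only [Finset.mem_sdiff, Finset.mem_insert]
    constructor
    · rintro ⟨hx1 | hx1, hx2⟩
      · exact absurd (Or.inl hx1) hx2
      · exact ⟨hx1, fun hxA => hx2 (Or.inr hxA)⟩
    · rintro ⟨hx1, hx2⟩
      exact ⟨Or.inr hx1, by rintro (rfl | hxA) <;> [exact hz hx1; exact hx2 hxA]⟩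
  rw [incNum, incNum, if_pos h, if_pos (Finset.insert_subset_insert z h), hsd]
  rw [Finset.insert_eq, Finset.union_product, Finset.filter_union,
    Finset.card_union_of_disjoint, Finset.singleton_product,
    Finset.filter_map, Finset.card_map, ← pow_add]
  · congr 2
  · rw [Finset.disjoint_left]
    intro p hp hq
    simp only [Finset.mem_filter, Finset.singleton_product, Finset.mem_map,
      Finset.mem_product, Function.Embedding.coeFn_mk] at hp hq
    obtain ⟨⟨x, hx, rfl⟩, -⟩ := hp
    exact hz hq.1.1

/-- Given finite subsets `B ⊇ S ⊇ A` of a totally ordered set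
`N` and an element `z ∈ N ∖ B`, the products `[B:S][S:A]` and
`[B ⊔ {z} : S ⊔ {z}][S ⊔ {z} : A ⊔ {z}]` differ by a sign `ε ∈ {1, −1}` that is
independent of `S` (explicitly `ε = (−1)^m` where `m` is the number of elements
of `B ∖ A` greater than `z`); moreover `[B ⊔ {z} : A ⊔ {z}] = ε · [B:A]` with the
same factor `ε`. -/
theorem incNum_insert_products {N : Type} [LinearOrder N] [Fintype N]
    (A S B : Finset N) (hAS : A ⊆ S) (hSB : S ⊆ B) (z : N) (hz : z ∉ B) :
    incNum (insert z B) (insert z S) * incNum (insert z S) (insert z A) =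
        (-1 : ℤ) ^ ((B \ A).filter (fun w => z < w)).card *
          (incNum B S * incNum S A) ∧
      incNum (insert z B) (insert z A) =
        (-1 : ℤ) ^ ((B \ A).filter (fun w => z < w)).card * incNum B A := by
  have hzS : z ∉ S := fun hx => hz (hSB hx)
  have hcard : ((B \ A).filter (fun w => z < w)).card =
      ((B \ S).filter (fun w => z < w)).card +
        ((S \ A).filter (fun w => z < w)).card := by
    rw [← Finset.card_union_of_disjoint, ← Finset.filter_union,
      Finset.sdiff_union_sdiff_cancel hSB hAS]
    refine Finset.disjoint_filter_filter ?_
    rw [Finset.disjoint_left]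
    intro x hx hx'
    simp only [Finset.mem_sdiff] at hx hx'
    exact hx.2 hx'.1
  constructor
  · rw [incNum_insert_key B S hSB z hz, incNum_insert_key S A hAS z hzS,
      hcard, pow_add]
    ring
  · exact incNum_insert_key B A (hAS.trans hSB) z hz
end

section
/- For finite subsets A ⊆ B of a totally ordered set N with a = #A, b = #B, and any element z ∈ B ∖ A, the total incidence numbers satisfy [B : B∖{z}] · [B∖{z} : A] + (−1)^{b−a} · [B : A ⊔ {z}] · [A ⊔ {z} : A] = 0. -/
open Finset

private def kappa {α : Type} [LinearOrder α] (B A : Finset α) : ℕ :=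
  ((B ×ˢ (B \ A)).filter (fun p => p.1 < p.2)).card

private lemma incNum_eq_kappa {α : Type} [LinearOrder α] {B A : Finset α} (h : A ⊆ B) :
    incNum B A = (-1 : ℤ) ^ kappa B A := by
  rw [incNum, if_pos h]; rfl

private lemma kappa_split {α : Type} [LinearOrder α] (A C B : Finset α)
    (hAC : A ⊆ C) (hCB : C ⊆ B) :
    kappa B A = kappa B C + kappa C A +
      (((B \ C) ×ˢ (C \ A)).filter (fun p => p.1 < p.2)).card := by
  classical
  have hU : B \ A = (B \ C) ∪ (C \ A) := (sdiff_union_sdiff_cancel hCB hAC).symm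
  have hB : B ×ˢ (C \ A) = C ×ˢ (C \ A) ∪ (B \ C) ×ˢ (C \ A) := by
    rw [← union_product, union_comm, sdiff_union_of_subset hCB]
  have d1 : Disjoint ((B ×ˢ (B \ C)).filter (fun p : α × α => p.1 < p.2))
      ((B ×ˢ (C \ A)).filter (fun p : α × α => p.1 < p.2)) := by
    apply disjoint_filter_filter
    rw [Finset.disjoint_left]
    rintro ⟨w, x⟩ h1 h2
    simp only [mem_product, mem_sdiff] at h1 h2
    exact h1.2.2 h2.2.1
  have d2 : Disjoint ((C ×ˢ (C \ A)).filter (fun p : α × α => p.1 < p.2))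
      (((B \ C) ×ˢ (C \ A)).filter (fun p : α × α => p.1 < p.2)) := by
    apply disjoint_filter_filter
    rw [Finset.disjoint_left]
    rintro ⟨w, x⟩ h1 h2
    simp only [mem_product, mem_sdiff] at h1 h2
    exact h2.1.2 h1.1
  unfold kappa
  rw [hU, product_union, filter_union, card_union_of_disjoint d1, hB,
    filter_union, card_union_of_disjoint d2]
  ring

private lemma neg_one_pow_shift (x y m K : ℕ) (h : x + y + m = K) :
    (-1 : ℤ) ^ x * (-1) ^ y = (-1) ^ K * (-1) ^ m := by
  subst h
  have hm : ((-1 : ℤ)) ^ m * (-1) ^ m = 1 := by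
    rw [← pow_add]; exact Even.neg_one_pow ⟨m, rfl⟩
  rw [pow_add, pow_add, mul_assoc, mul_assoc, hm, mul_one]

private lemma final_cancel (K m1 m2 : ℕ) :
    (-1 : ℤ) ^ K * (-1) ^ m1 + (-1) ^ (m1 + m2 + 1) * ((-1) ^ K * (-1) ^ m2) = 0 := by
  have h2 : ((-1 : ℤ)) ^ m2 * (-1) ^ m2 = 1 := by
    rw [← pow_add]; exact Even.neg_one_pow ⟨m2, rfl⟩
  rw [pow_add, pow_add, pow_one]
  linear_combination (-(-1 : ℤ) ^ K * (-1) ^ m1) * h2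


/-- For finite subsets `A ⊆ B` of a totally ordered set `N`
with `a = #A`, `b = #B`, and any element `z ∈ B ∖ A`, the total incidence
numbers satisfy
`[B : B∖{z}] · [B∖{z} : A] + (−1)^{b−a} · [B : A ⊔ {z}] · [A ⊔ {z} : A] = 0`. -/
theorem incNum_pleasant_identity {N : Type} [LinearOrder N] [Fintype N]
    (A B : Finset N) (hAB : A ⊆ B) (z : N) (hzB : z ∈ B) (hzA : z ∉ A) :
    incNum B (B.erase z) * incNum (B.erase z) A +
        (-1 : ℤ) ^ (B.card - A.card) * (incNum B (insert z A) * incNum (insert z A) A) = 0 := by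
  classical
  have hA1 : A ⊆ B.erase z := subset_erase.2 ⟨hAB, hzA⟩
  have h1B : B.erase z ⊆ B := erase_subset z B
  have hA2 : A ⊆ insert z A := subset_insert z A
  have h2B : insert z A ⊆ B := insert_subset hzB hAB
  set S : Finset N := (B \ A).erase z with hS
  have hzBA : z ∈ B \ A := mem_sdiff.2 ⟨hzB, hzA⟩
  have hBe : B \ B.erase z = {z} := sdiff_erase_self hzB
  have heA : B.erase z \ A = S := by
    rw [hS, erase_eq, erase_eq, sdiff_sdiff_comm]
  have hIz : insert z A \ A = {z} := insert_sdiff_cancel hzA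
  have hBI : B \ insert z A = S := by
    rw [hS, erase_eq, sdiff_sdiff, insert_eq, union_comm, sup_eq_union]
  set m1 : ℕ := (S.filter (fun x => z < x)).card with hm1
  set m2 : ℕ := (S.filter (fun x => x < z)).card with hm2
  have c1 : (({z} ×ˢ S).filter (fun p : N × N => p.1 < p.2)).card = m1 := by
    rw [singleton_product, filter_map, card_map]
    rfl
  have c2 : ((S ×ˢ ({z} : Finset N)).filter (fun p : N × N => p.1 < p.2)).card = m2 := by
    rw [product_singleton, filter_map, card_map]
    rfl
  have hm12 : m2 + m1 = S.card := by
    rw [hm1, hm2]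
    have h0 := Finset.card_filter_add_card_filter_not (s := S)
      (p := fun x => x < z)
    have hf : S.filter (fun x => ¬ x < z) = S.filter (fun x => z < x) := by
      apply filter_congr
      intro x hx
      have hne : x ≠ z := ne_of_mem_erase hx
      simp only [not_lt]
      exact ⟨fun h => lt_of_le_of_ne h (Ne.symm hne), fun h => le_of_lt h⟩
    rw [hf] at h0
    exact h0
  have hK : m1 + m2 + 1 = B.card - A.card := by
    rw [← card_sdiff_of_subset hAB]
    have h1 : S.card + 1 = (B \ A).card := by
      rw [hS]; exact card_erase_add_one hzBA
    omega
  have k1 : kappa B A = kappa B (B.erase z) + kappa (B.erase z) A + m1 := by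
    have := kappa_split A (B.erase z) B hA1 h1B
    rwa [hBe, heA, c1] at this
  have k2 : kappa B A = kappa B (insert z A) + kappa (insert z A) A + m2 := by
    have := kappa_split A (insert z A) B hA2 h2B
    rwa [hBI, hIz, c2] at this
  rw [incNum_eq_kappa h1B, incNum_eq_kappa hA1, incNum_eq_kappa h2B, incNum_eq_kappa hA2,
    neg_one_pow_shift _ _ m1 (kappa B A) k1.symm,
    neg_one_pow_shift _ _ m2 (kappa B A) k2.symm, ← hK]
  exact final_cancel (kappa B A) m1 m2
end

section
/- Let F be a special N-diagram of R-modules with totalisation map D = D(F). For all subsets A ⊆ B ⊆ N and every element z ∈ N ∖ B, the two component maps (D ∘ D)_{B,A} and (D ∘ D)_{B ⊔ {z}, A ⊔ {z}} agree up to sign: there exists ε ∈ {1, −1} with (D ∘ D)_{B ⊔ {z}, A ⊔ {z}} = ε · (D ∘ D)_{B,A}. -/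
open DirectSum

/-- An `N`-diagram (`N = {1,…,n}`): for each `A ⊆ N` a ℤ-graded `R`-module
`F A`, and for each pair `A, B` a graded module homomorphism
`H_{B,A} : F A → F B` of degree `#A − #B + 1`, encoded as maps
`F A i →ₗ[R] F B j` for all `i, j` with `i + (#A − #B + 1) = j`.
(For `A ⊄ B` the map `H_{B,A}` is irrelevant: it is multiplied by the
incidence number `[B:A] = 0` in the totalisation.) -/
structure NDiagram (R : Type) [Ring R] (n : ℕ) : Type 1 where
  F : Finset (Fin n) → ℤ → Type
  [acg : ∀ A i, AddCommGroup (F A i)]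
  [mod : ∀ A i, Module R (F A i)]
  H : ∀ (A B : Finset (Fin n)) (i j : ℤ),
      i + ((A.card : ℤ) - B.card + 1) = j → (F A i →ₗ[R] F B j)

attribute [instance] NDiagram.acg NDiagram.mod

variable {R : Type} [Ring R] {n : ℕ}

/-- The totalisation `Tot(F)^ℓ = ⊕_{A ⊆ N} F(A)^{ℓ−#A}`. -/
noncomputable abbrev NDiagram.Tot (d : NDiagram R n) (ℓ : ℤ) : Type :=
  ⨁ (A : Finset (Fin n)), d.F A (ℓ - A.card)

/-- The degree-1 map `D(F)` on the totalisation, with matrix entries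
`D_{B,A} = (−1)^{#A·#B}[B:A]·H_{B,A}`. -/
noncomputable def NDiagram.D (d : NDiagram R n) (ℓ ℓ' : ℤ) (h : ℓ + 1 = ℓ') :
    d.Tot ℓ →ₗ[R] d.Tot ℓ' :=
  DirectSum.toModule R _ _ fun A =>
    ∑ B : Finset (Fin n),
      (((-1 : ℤ) ^ (A.card * B.card) * incNum B A) •
        ((DirectSum.lof R (Finset (Fin n)) (fun B => d.F B (ℓ' - B.card)) B).comp
          (d.H A B (ℓ - A.card) (ℓ' - B.card) (by omega))))

/-- A homotopy commutative `N`-cube: an `N`-diagram whose totalisation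
differential squares to zero. -/
def NDiagram.IsCube (d : NDiagram R n) : Prop :=
  ∀ (ℓ ℓ' ℓ'' : ℤ) (h : ℓ + 1 = ℓ') (h' : ℓ' + 1 = ℓ''),
    (d.D ℓ' ℓ'' h').comp (d.D ℓ ℓ' h) = 0

/-- A special `N`-diagram: the graded module `C` is the same for all vertices,
and the structure map for `A ⊆ B` depends only on `S = B ∖ A`; it is a graded
map of degree `1 − #S`. The case `S = ∅` is the differential `d`, the case
`S = {k}` gives the maps `f_k`, and `#S ≥ 2` gives the (higher) homotopies
`H_S`. -/
structure SpecialDiagram (R : Type) [Ring R] (n : ℕ) : Type 1 where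
  C : ℤ → Type
  [acg : ∀ i, AddCommGroup (C i)]
  [mod : ∀ i, Module R (C i)]
  Hh : ∀ (S : Finset (Fin n)) (i j : ℤ), i + (1 - (S.card : ℤ)) = j → (C i →ₗ[R] C j)

attribute [instance] SpecialDiagram.acg SpecialDiagram.mod

/-- The `N`-diagram determined by a special `N`-diagram:
`F(A) = C` for all `A`, and `H_{B,A} = H_{B∖A}` for `A ⊆ B` (and `0` otherwise). -/
noncomputable def SpecialDiagram.toNDiagram (d : SpecialDiagram R n) : NDiagram R n where
  F := fun _ => d.C
  H := fun A B i j h =>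
    if hAB : A ⊆ B then
      d.Hh (B \ A) i j (by
        have hc : (B \ A).card = B.card - A.card := by
          rw [Finset.card_sdiff, Finset.inter_eq_left.mpr hAB]
        have hle := Finset.card_le_card hAB
        omega)
    else 0

/-- The `(B,A)`-component of `D(F) ∘ D(F)` for (the `N`-diagram associated with)
a special `N`-diagram:
`(D∘D)_{B,A} = Σ_{A ⊆ S ⊆ B} (−1)^{#B·#S}(−1)^{#S·#A}[B:S][S:A]·H_{B,S}∘H_{S,A}`
(terms with `S ⊉ A` or `S ⊄ B` vanish since then `[B:S][S:A] = 0`). -/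
noncomputable def SpecialDiagram.DDcomp (d : SpecialDiagram R n) (B A : Finset (Fin n))
    (i j : ℤ) (h : i + ((A.card : ℤ) - B.card + 2) = j) : d.C i →ₗ[R] d.C j :=
  ∑ S : Finset (Fin n),
    ((-1 : ℤ) ^ (B.card * S.card) * (-1 : ℤ) ^ (S.card * A.card)
        * incNum B S * incNum S A) •
      ((d.toNDiagram.H S B (i + ((A.card : ℤ) - S.card + 1)) j (by omega)).comp
        (d.toNDiagram.H A S i (i + ((A.card : ℤ) - S.card + 1)) rfl))

/-! Only the middle vertices `S ⊇ A ∪ {z}` contribute to `(D∘D)_{B∪{z},A∪{z}}`, and these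
are `S = T ∪ {z}` with `A ⊆ T ⊆ B`. Adjoining `z` to all three sets leaves the structure maps
`H_{S∖A}` unchanged and multiplies `[B:T]` by `(-1)^k`, where `k` counts the elements of `B ∖ T`
above `z`. Along `A ⊆ T ⊆ B` these signs multiply to one that does not depend on `T`, and so
do the changes of `(-1)^{#B·#T}(-1)^{#T·#A}`. -/

open Finset

lemma incNum_eq_zero_of_not_subset {α : Type} [LinearOrder α] {A B : Finset α}
    (h : ¬A ⊆ B) : incNum B A = 0 :=
  if_neg h

lemma insert_sdiff_insert_of_notMem {α : Type} [DecidableEq α] {z : α} {A B : Finset α}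
    (hzB : z ∉ B) : insert z B \ insert z A = B \ A := by
  rw [insert_sdiff_insert, sdiff_insert_of_notMem hzB]

lemma incNum_insert_insert {α : Type} [LinearOrder α] {z : α} {A B : Finset α}
    (hzA : z ∉ A) (hzB : z ∉ B) :
    incNum (insert z B) (insert z A) = (-1) ^ #{x ∈ B \ A | z < x} * incNum B A := by
  simp only [incNum, insert_subset_insert_iff hzA]
  split_ifs with hAB
  · rw [insert_sdiff_insert_of_notMem hzB, insert_eq, union_product, filter_union,
      card_union_of_disjoint, singleton_product, filter_map, card_map, pow_add]
    · rfl
    · exact disjoint_filter_filter (disjoint_product.2 (Or.inl (disjoint_singleton_left.2 hzB)))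
  · rw [mul_zero]

lemma card_filter_sdiff_add_card_filter_sdiff {α : Type} [DecidableEq α] {A T B : Finset α}
    (hAT : A ⊆ T) (hTB : T ⊆ B) (p : α → Prop) [DecidablePred p] :
    #{x ∈ B \ T | p x} + #{x ∈ T \ A | p x} = #{x ∈ B \ A | p x} := by
  rw [← sdiff_union_sdiff_cancel hTB hAT, filter_union, card_union_of_disjoint]
  exact disjoint_filter_filter (sdiff_disjoint.mono_right sdiff_subset)

lemma incNum_mul_incNum_insert_insert {α : Type} [LinearOrder α] {z : α} {A T B : Finset α}
    (hzA : z ∉ A) (hzT : z ∉ T) (hzB : z ∉ B) :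
    incNum (insert z B) (insert z T) * incNum (insert z T) (insert z A)
      = (-1) ^ #{x ∈ B \ A | z < x} * (incNum B T * incNum T A) := by
  rw [incNum_insert_insert hzT hzB, incNum_insert_insert hzA hzT]
  by_cases hATB : A ⊆ T ∧ T ⊆ B
  · rw [← card_filter_sdiff_add_card_filter_sdiff hATB.1 hATB.2, pow_add]
    ring
  · rcases not_and_or.1 hATB with h | h <;> simp [incNum_eq_zero_of_not_subset h]

lemma neg_one_pow_succ_mul_succ (a b t : ℕ) :
    (-1 : ℤ) ^ ((b + 1) * (t + 1)) * (-1) ^ ((t + 1) * (a + 1))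
      = (-1) ^ (a + b) * ((-1) ^ (b * t) * (-1) ^ (t * a)) := by
  have hsq : ((-1 : ℤ) ^ t) ^ 2 = 1 := by rw [← pow_mul, pow_mul', neg_one_sq, one_pow]
  linear_combination (-1 : ℤ) ^ (a + b) * (-1) ^ (b * t) * (-1) ^ (t * a) * hsq

lemma sign_mul_incNum_insert_insert {α : Type} [LinearOrder α] {z : α} {A T B : Finset α}
    (hzA : z ∉ A) (hzT : z ∉ T) (hzB : z ∉ B) :
    (-1) ^ (#(insert z B) * #(insert z T)) * (-1) ^ (#(insert z T) * #(insert z A))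
        * incNum (insert z B) (insert z T) * incNum (insert z T) (insert z A)
      = (-1) ^ (#A + #B + #{x ∈ B \ A | z < x})
        * ((-1) ^ (#B * #T) * (-1) ^ (#T * #A) * incNum B T * incNum T A) := by
  rw [mul_assoc, incNum_mul_incNum_insert_insert hzA hzT hzB, card_insert_of_notMem hzA,
    card_insert_of_notMem hzT, card_insert_of_notMem hzB, neg_one_pow_succ_mul_succ, pow_add]
  ring

lemma Finset.sum_finset_eq_of_insert {α M : Type} [Fintype α] [DecidableEq α]
    [AddCommMonoid M] {z : α} {f g : Finset α → M} (hf : ∀ S, z ∉ S → f S = 0)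
    (hg : ∀ S, z ∈ S → g S = 0) (hfg : ∀ S, z ∉ S → f (insert z S) = g S) :
    ∑ S, f S = ∑ S, g S := by
  have hsplit (h : Finset α → M) :
      ∑ S, h S = ∑ S ∈ (univ.erase z).powerset, h S
        + ∑ S ∈ (univ.erase z).powerset, h (insert z S) := by
    rw [← sum_powerset_insert (notMem_erase z univ), insert_erase (mem_univ z), powerset_univ]
  have hz {S : Finset α} (hS : S ∈ (univ.erase z).powerset) : z ∉ S :=
    fun h => notMem_erase z univ (mem_powerset.1 hS h)
  rw [hsplit f, hsplit g, sum_eq_zero fun S hS => hf S (hz hS), zero_add,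
    sum_eq_zero fun S hS => hg _ (mem_insert_self z S), add_zero]
  exact sum_congr rfl fun S hS => hfg S (hz hS)

lemma SpecialDiagram.toNDiagram_H_insert_insert (d : SpecialDiagram R n) {z : Fin n}
    {A B : Finset (Fin n)} (hzA : z ∉ A) (hzB : z ∉ B) (i j : ℤ)
    (h : i + (((insert z A).card : ℤ) - (insert z B).card + 1) = j)
    (h' : i + ((A.card : ℤ) - B.card + 1) = j) :
    d.toNDiagram.H (insert z A) (insert z B) i j h = d.toNDiagram.H A B i j h' := by
  simp only [toNDiagram, insert_subset_insert_iff hzA, insert_sdiff_insert_of_notMem hzB]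
  rfl

lemma SpecialDiagram.toNDiagram_H_comp_insert_insert (d : SpecialDiagram R n) {z : Fin n}
    {A S B : Finset (Fin n)} (hzA : z ∉ A) (hzS : z ∉ S) (hzB : z ∉ B) {i k k' j : ℤ}
    (p : k' + (((insert z S).card : ℤ) - (insert z B).card + 1) = j)
    (q : i + (((insert z A).card : ℤ) - (insert z S).card + 1) = k')
    (p' : k + ((S.card : ℤ) - B.card + 1) = j) (q' : i + ((A.card : ℤ) - S.card + 1) = k) :
    (d.toNDiagram.H (insert z S) (insert z B) k' j p).comp
        (d.toNDiagram.H (insert z A) (insert z S) i k' q)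
      = (d.toNDiagram.H S B k j p').comp (d.toNDiagram.H A S i k q') := by
  obtain rfl : k = k' := by
    rw [card_insert_of_notMem hzA, card_insert_of_notMem hzS] at q
    omega
  rw [toNDiagram_H_insert_insert d hzS hzB _ _ p p',
    toNDiagram_H_insert_insert d hzA hzS _ _ q q']
  rfl

/-- Let `F` be a special `N`-diagram with totalisation map
`D = D(F)`. For all subsets `A ⊆ B ⊆ N` and every `z ∈ N ∖ B`, the component
maps `(D ∘ D)_{B,A}` and `(D ∘ D)_{B ⊔ {z}, A ⊔ {z}}` agree up to sign: there
is `ε ∈ {1, −1}` with `(D ∘ D)_{B ⊔ {z}, A ⊔ {z}} = ε · (D ∘ D)_{B,A}`. -/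
theorem DDcomp_insert_eq_sign_smul (d : SpecialDiagram R n)
    (A B : Finset (Fin n)) (hAB : A ⊆ B) (z : Fin n) (hz : z ∉ B) :
    ∃ ε : ℤ, (ε = 1 ∨ ε = -1) ∧
      ∀ (i j : ℤ) (h : i + ((A.card : ℤ) - B.card + 2) = j)
        (h' : i + (((insert z A).card : ℤ) - ((insert z B).card : ℤ) + 2) = j),
        d.DDcomp (insert z B) (insert z A) i j h' = ε • d.DDcomp B A i j h := by
  have hzA : z ∉ A := fun hzA => hz (hAB hzA)
  refine ⟨(-1) ^ (#A + #B + #{x ∈ B \ A | z < x}), neg_one_pow_eq_or ℤ _,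
    fun i j h h' => ?_⟩
  rw [SpecialDiagram.DDcomp, SpecialDiagram.DDcomp]
  -- The summands live in `d.toNDiagram.F _ _`, which is `d.C _` only up to unfolding, so the
  -- steps below cannot be plain rewrites and close with definitional equalities.
  refine Eq.trans ?_ smul_sum.symm
  refine sum_finset_eq_of_insert (z := z) (fun S hzS => ?_) (fun S hzS => ?_)
    (fun T hzT => ?_)
  · rw [incNum_eq_zero_of_not_subset fun hAS => hzS (hAS (mem_insert_self z A)), mul_zero,
      zero_smul]
    rfl
  · rw [incNum_eq_zero_of_not_subset fun hSB => hz (hSB hzS), mul_zero, zero_mul, zero_smul]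
    exact zsmul_zero _
  · rw [d.toNDiagram_H_comp_insert_insert hzA hzT hz _ _ (by omega) rfl,
      sign_mul_incNum_insert_insert hzA hzT hz]
    exact mul_smul _ _ _
end
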